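/- Let S = ℝ[x,y,z], r ≥ 1, and let J = ⟨x^{2r+1-i} y^i z^i : 0 ≤ i ≤ r⟩ + ⟨y^{2r+1-i} x^i z^i : 0 ≤ i ≤ r⟩. Then in degree d = 4r+1, every monomial x^a y^b z^c with a+b+c = 4r+1 and c ≤ 2r lies in J; consequently dim J_{4r+1} = C(4r+3,2) - C(2r+2,2) = (2r+1)(3r+2). -/

import Mathlib

open MvPolynomial

noncomputable section

/-- `S = ℝ[x,y,z]`. -/
abbrev S3 := MvPolynomial (Fin 3) ℝ

namespace Stmt9Aux

def e (a b c : ℕ) : Fin 3 →₀ ℕ :=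
  Finsupp.single 0 a + Finsupp.single 1 b + Finsupp.single 2 c

@[simp] lemma e_apply0 (a b c : ℕ) : e a b c 0 = a := by
  simp [e, Finsupp.single_apply]
@[simp] lemma e_apply1 (a b c : ℕ) : e a b c 1 = b := by
  simp [e, Finsupp.single_apply]
@[simp] lemma e_apply2 (a b c : ℕ) : e a b c 2 = c := by
  simp [e, Finsupp.single_apply]

lemma eq_e (d : Fin 3 →₀ ℕ) : d = e (d 0) (d 1) (d 2) := by
  ext i; fin_cases i <;> simp

lemma degree_three (d : Fin 3 →₀ ℕ) : d.degree = d 0 + d 1 + d 2 := by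
  have h : d.degree = ∑ i : Fin 3, d i := by
    refine Finset.sum_subset (Finset.subset_univ _) ?_
    intro i _ hi
    exact Finsupp.notMem_support_iff.mp hi
  rw [h, Fin.sum_univ_three]

lemma e_le {a b c a' b' c' : ℕ} (h0 : a ≤ a') (h1 : b ≤ b') (h2 : c ≤ c') :
    e a b c ≤ e a' b' c' := by
  rw [Finsupp.le_def]
  intro i; fin_cases i <;> simpa

lemma monomial_e (a b c : ℕ) :
    (X 0 ^ a * X 1 ^ b * X 2 ^ c : S3) = monomial (e a b c) 1 := by
  simp [e, X_pow_eq_monomial, monomial_mul]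

lemma monomial_e' (a b c : ℕ) :
    (X 1 ^ b * X 0 ^ a * X 2 ^ c : S3) = monomial (e a b c) 1 := by
  rw [← monomial_e]; ring

def E (r : ℕ) : Set (Fin 3 →₀ ℕ) :=
  {s | ∃ i ≤ r, s = e (2 * r + 1 - i) i i} ∪ {s | ∃ i ≤ r, s = e i (2 * r + 1 - i) i}

lemma J_eq (r : ℕ) :
    Ideal.span {m : S3 | ∃ i ≤ r, m = X 0 ^ (2 * r + 1 - i) * X 1 ^ i * X 2 ^ i}
      + Ideal.span {m : S3 | ∃ i ≤ r, m = X 1 ^ (2 * r + 1 - i) * X 0 ^ i * X 2 ^ i}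
    = Ideal.span ((fun s => monomial s (1 : ℝ)) '' E r) := by
  rw [E, Set.image_union, Ideal.span_union, Ideal.add_eq_sup]
  congr 1
  · congr 1
    ext m
    constructor
    · rintro ⟨i, hi, rfl⟩
      exact ⟨e (2 * r + 1 - i) i i, ⟨i, hi, rfl⟩, (monomial_e _ _ _).symm⟩
    · rintro ⟨s, ⟨i, hi, rfl⟩, rfl⟩
      exact ⟨i, hi, (monomial_e _ _ _).symm⟩
  · congr 1
    ext m
    constructor
    · rintro ⟨i, hi, rfl⟩
      exact ⟨e i (2 * r + 1 - i) i, ⟨i, hi, rfl⟩, (monomial_e' _ _ _).symm⟩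
    · rintro ⟨s, ⟨i, hi, rfl⟩, rfl⟩
      exact ⟨i, hi, (monomial_e' _ _ _).symm⟩

lemma mem_J_iff {r : ℕ} {J : Ideal S3}
    (hJ : J = Ideal.span {m : S3 | ∃ i ≤ r, m = X 0 ^ (2 * r + 1 - i) * X 1 ^ i * X 2 ^ i}
            + Ideal.span {m : S3 | ∃ i ≤ r, m = X 1 ^ (2 * r + 1 - i) * X 0 ^ i * X 2 ^ i})
    (p : S3) :
    p ∈ J ↔ ∀ m ∈ p.support, ∃ s ∈ E r, s ≤ m := by
  rw [hJ, J_eq, mem_ideal_span_monomial_image]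

lemma key {r a b c : ℕ} (hsum : a + b + c = 4 * r + 1) (hc : c ≤ 2 * r) :
    ∃ s ∈ E r, s ≤ e a b c := by
  rcases le_total b a with hba | hab
  · refine ⟨e (2 * r + 1 - min (min b c) r) (min (min b c) r) (min (min b c) r),
      Or.inl ⟨min (min b c) r, min_le_right _ _, rfl⟩, e_le ?_ ?_ ?_⟩ <;> omega
  · refine ⟨e (min (min a c) r) (2 * r + 1 - min (min a c) r) (min (min a c) r),
      Or.inr ⟨min (min a c) r, min_le_right _ _, rfl⟩, e_le ?_ ?_ ?_⟩ <;> omega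

def T (r : ℕ) : Finset ((_ : ℕ) × ℕ) :=
  (Finset.range (2 * r + 1)).sigma (fun c => Finset.range (4 * r + 2 - c))

lemma card_T (r : ℕ) : (T r).card = (2 * r + 1) * (3 * r + 2) := by
  rw [T, Finset.card_sigma]
  simp only [Finset.card_range]
  rw [← Finset.sum_range_reflect]
  rw [Finset.sum_congr rfl (g := fun j => 2 * r + 2 + j)
    (fun j hj => by
      rw [Finset.mem_range] at hj
      show 4 * r + 2 - (2 * r + 1 - 1 - j) = 2 * r + 2 + j
      omega)]
  rw [Finset.sum_add_distrib, Finset.sum_const, Finset.card_range, smul_eq_mul]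
  have h := Finset.sum_range_id_mul_two (2 * r + 1)
  have h1 : 2 * r + 1 - 1 = 2 * r := by omega
  rw [h1] at h
  have h2 : (2 * r + 1) * (2 * r) = (2 * (r * r) + r) * 2 := by ring
  have hS : ∑ i ∈ Finset.range (2 * r + 1), i = 2 * (r * r) + r := by linarith
  rw [hS]; ring

def A (r : ℕ) : Finset (Fin 3 →₀ ℕ) :=
  (T r).image (fun p => e p.2 (4 * r + 1 - p.1 - p.2) p.1)

lemma mem_A {r : ℕ} (m : Fin 3 →₀ ℕ) :
    m ∈ A r ↔ m 0 + m 1 + m 2 = 4 * r + 1 ∧ m 2 ≤ 2 * r := by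
  constructor
  · intro hm
    rw [A, Finset.mem_image] at hm
    obtain ⟨p, hp, rfl⟩ := hm
    rw [T, Finset.mem_sigma, Finset.mem_range, Finset.mem_range] at hp
    simp only [e_apply0, e_apply1, e_apply2]
    omega
  · rintro ⟨h1, h2⟩
    rw [A, Finset.mem_image]
    refine ⟨⟨m 2, m 0⟩, ?_, ?_⟩
    · simp only [T, Finset.mem_sigma, Finset.mem_range]; omega
    · show e (m 0) (4 * r + 1 - m 2 - m 0) (m 2) = m
      have h3 : 4 * r + 1 - m 2 - m 0 = m 1 := by omega
      rw [h3]
      exact (eq_e m).symm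

lemma card_A (r : ℕ) : (A r).card = (2 * r + 1) * (3 * r + 2) := by
  rw [A, Finset.card_image_of_injOn, card_T]
  intro p _ q _ h
  have h0 := congrArg (fun f : Fin 3 →₀ ℕ => f 0) h
  have h2 := congrArg (fun f : Fin 3 →₀ ℕ => f 2) h
  simp only [e_apply0, e_apply2] at h0 h2
  exact Sigma.ext h2 (heq_of_eq h0)

lemma M_eq {r : ℕ} (hr : 1 ≤ r) {J : Ideal S3}
    (hJ : J = Ideal.span {m : S3 | ∃ i ≤ r, m = X 0 ^ (2 * r + 1 - i) * X 1 ^ i * X 2 ^ i}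
            + Ideal.span {m : S3 | ∃ i ≤ r, m = X 1 ^ (2 * r + 1 - i) * X 0 ^ i * X 2 ^ i}) :
    (Submodule.restrictScalars ℝ (J : Submodule S3 S3)
        ⊓ homogeneousSubmodule (Fin 3) ℝ (4 * r + 1))
      = Submodule.span ℝ ((fun s => (monomial s 1 : S3)) '' (A r : Set (Fin 3 →₀ ℕ))) := by
  apply le_antisymm
  · rintro p hp
    rw [Submodule.mem_inf] at hp
    obtain ⟨hpJ, hph⟩ := hp
    rw [Submodule.restrictScalars_mem] at hpJ
    rw [mem_homogeneousSubmodule] at hph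
    rw [show p = ∑ m ∈ p.support, monomial m (coeff m p) from
      (support_sum_monomial_coeff p).symm]
    apply Submodule.sum_mem
    intro m hm
    have hdeg : m.degree = 4 * r + 1 := by
      rw [Finsupp.degree_eq_weight_one]
      exact hph (mem_support_iff.mp hm)
    rw [degree_three] at hdeg
    obtain ⟨s, hs, hsle⟩ := (mem_J_iff hJ p).mp hpJ m hm
    rw [Finsupp.le_def] at hsle
    have hm2 : m 2 ≤ 2 * r := by
      rcases hs with ⟨i, hi, rfl⟩ | ⟨i, hi, rfl⟩
      · have := hsle 0; have := hsle 1
        simp only [e_apply0, e_apply1] at *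
        omega
      · have := hsle 0; have := hsle 1
        simp only [e_apply0, e_apply1] at *
        omega
    have hmA : m ∈ A r := (mem_A m).mpr ⟨hdeg, hm2⟩
    rw [show (monomial m (coeff m p) : S3) = (coeff m p) • (monomial m 1 : S3) by
      rw [smul_monomial, smul_eq_mul, mul_one]]
    exact Submodule.smul_mem _ _ (Submodule.subset_span ⟨m, hmA, rfl⟩)
  · rw [Submodule.span_le]
    rintro _ ⟨m, hm, rfl⟩
    obtain ⟨h1, h2⟩ := (mem_A m).mp hm
    rw [SetLike.mem_coe, Submodule.mem_inf, Submodule.restrictScalars_mem,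
      mem_homogeneousSubmodule]
    constructor
    · rw [mem_J_iff hJ]
      intro d hd
      rw [support_monomial, if_neg (one_ne_zero)] at hd
      rw [Finset.mem_singleton] at hd
      obtain ⟨s, hs, hsle⟩ := key (r := r) (a := m 0) (b := m 1) (c := m 2) h1 h2
      refine ⟨s, hs, ?_⟩
      rw [hd, eq_e m]
      exact hsle
    · apply isHomogeneous_monomial
      rw [degree_three]; omega

end Stmt9Aux

open Stmt9Aux in
theorem stmt9 (r : ℕ) (hr : 1 ≤ r)
    (J : Ideal S3)
    (hJ : J = Ideal.span {m : S3 | ∃ i ≤ r, m = X 0 ^ (2 * r + 1 - i) * X 1 ^ i * X 2 ^ i}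
            + Ideal.span {m : S3 | ∃ i ≤ r, m = X 1 ^ (2 * r + 1 - i) * X 0 ^ i * X 2 ^ i}) :
    (∀ a b c : ℕ, a + b + c = 4 * r + 1 → c ≤ 2 * r →
        (X 0 ^ a * X 1 ^ b * X 2 ^ c : S3) ∈ J) ∧
    Module.finrank ℝ
        ↥(Submodule.restrictScalars ℝ (J : Submodule S3 S3)
          ⊓ homogeneousSubmodule (Fin 3) ℝ (4 * r + 1))
      = (2 * r + 1) * (3 * r + 2) := by
  constructor
  · intro a b c hsum hc
    rw [monomial_e, mem_J_iff hJ]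
    intro m hm
    rw [support_monomial, if_neg (one_ne_zero), Finset.mem_singleton] at hm
    subst hm
    exact key hsum hc
  · rw [M_eq hr hJ]
    have himg : ((fun s => (monomial s 1 : S3)) '' (A r : Set (Fin 3 →₀ ℕ)))
        = ((A r).image (fun s => (monomial s 1 : S3)) : Finset S3) := by
      rw [Finset.coe_image]
    rw [himg]
    have hli : LinearIndependent ℝ
        ((↑) : ((A r).image (fun s => (monomial s 1 : S3)) : Finset S3) → S3) := by
      have hb := (basisMonomials (Fin 3) ℝ).linearIndependent.linearIndepOn_id
      refine hb.mono ?_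
      intro x hx
      obtain ⟨s, _, rfl⟩ := Finset.mem_image.mp (Finset.mem_coe.mp hx)
      exact ⟨s, rfl⟩
    rw [finrank_span_finset_eq_card hli]
    rw [Finset.card_image_of_injective _ (monomial_left_injective one_ne_zero), card_A]
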